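/- arXiv:math/0310226 — 3 statements merged into one kernel-verified Lean document; each statement's English description precedes it below -/
import Mathlib

section
/- Let W = λ A_φ where φ is a g-self-adjoint isometry with φ² = Id, and suppose both eigenspaces of φ are nonzero. If Tr(J_W(x)) = 0 for all x, then λ = 0. (Proof idea: if a^± are the dimensions of the ±1 eigenspaces and e^± are non-null vectors therein with g(e^±,e^±) = ε^±, then Tr(J_W(e^+)) = ε^+ λ (a^+ − 1 − a^−) and Tr(J_W(e^−)) = ε^− λ (a^− − 1 − a^+), forcing λ = 0.) -/
/-!
The Jacobi operator of `W = λ A_φ` is `J x = λ (g(φx, x) φ - g(φ ·, x) φx)`, so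
`Tr J(x) = λ (g(φx, x) Tr φ - g(x, x))`. On a non-null eigenvector `e` of `φ` with eigenvalue
`s = ±1` this is `λ g(e, e) (s Tr φ - 1)`. Non-null eigenvectors exist for both signs because
`g` restricted to each eigenspace is symmetric and nonzero: for `v` in it,
`g(v, w + s φw) = 2 g(v, w)`, and `w + s φw` lies in it too. Hence the vanishing of the trace gives
`λ (Tr φ - 1) = 0 = λ (Tr φ + 1)`, whence `λ = 0`.
-/

open Module.End

section Involution

variable {V : Type*} [AddCommGroup V] [Module ℝ V] {g : V →ₗ[ℝ] V →ₗ[ℝ] ℝ} {φ : V →ₗ[ℝ] V}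
  {s : ℝ}

lemma add_smul_apply_mem_eigenspace (hφ2 : ∀ x, φ (φ x) = x) (hs : s * s = 1) (w : V) :
    w + s • φ w ∈ eigenspace φ s := by
  rw [mem_eigenspace_iff, map_add, map_smul, hφ2, smul_add, smul_smul, hs, one_smul, add_comm]

lemma apply_add_smul_apply_of_eigenvector (hφ_sa : ∀ x y, g (φ x) y = g x (φ y))
    (hs : s * s = 1) {v : V} (hv : φ v = s • v) (w : V) :
    g v (w + s • φ w) = 2 * g v w := by
  have hvφw : g v (φ w) = s * g v w := by
    rw [← hφ_sa, hv, map_smul, LinearMap.smul_apply, smul_eq_mul]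
  rw [map_add, map_smul, hvφw, smul_eq_mul, ← mul_assoc, hs]
  ring

lemma exists_eigenvector_apply_self_ne_zero (hg_symm : ∀ x y, g x y = g y x)
    (hg_nd : ∀ v, (∀ w, g v w = 0) → v = 0) (hφ_sa : ∀ x y, g (φ x) y = g x (φ y))
    (hφ2 : ∀ x, φ (φ x) = x) (hs : s * s = 1) {v : V} (hv0 : v ≠ 0) (hv : φ v = s • v) :
    ∃ e, φ e = s • e ∧ g e e ≠ 0 := by
  obtain ⟨w, hw⟩ : ∃ w, g v w ≠ 0 := by
    by_contra! h
    exact hv0 (hg_nd v h)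
  have hrestrict : g.domRestrict₁₂ (eigenspace φ s) (eigenspace φ s) ≠ 0 := fun h ↦ by
    have := LinearMap.congr_fun₂ h ⟨v, mem_eigenspace_iff.mpr hv⟩
      ⟨_, add_smul_apply_mem_eigenspace hφ2 hs w⟩
    rw [LinearMap.domRestrict₁₂_apply, apply_add_smul_apply_of_eigenvector hφ_sa hs hv] at this
    exact hw (by simpa using this)
  obtain ⟨⟨e, he⟩, hee⟩ :=
    LinearMap.BilinForm.exists_bilinForm_self_ne_zero hrestrict ⟨fun x y ↦ hg_symm x y⟩
  exact ⟨e, mem_eigenspace_iff.mp he, hee⟩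

end Involution

section Jacobi

variable {V : Type*} [AddCommGroup V] [Module ℝ V] {g : V →ₗ[ℝ] V →ₗ[ℝ] ℝ} {φ : V →ₗ[ℝ] V}
  {lam : ℝ} {W : V → V → V → V → ℝ} {J : V → V →ₗ[ℝ] V}

lemma jacobi_eq (hg_nd : ∀ v, (∀ w, g v w = 0) → v = 0)
    (hW : ∀ x y z w, W x y z w = lam * (g (φ x) w * g (φ y) z - g (φ x) z * g (φ y) w))
    (hJ : ∀ x y z, g (J x y) z = W y x x z) (x : V) :
    J x = lam • (g (φ x) x • φ - (g.flip x ∘ₗ φ).smulRight (φ x)) := by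
  ext y
  refine sub_eq_zero.mp (hg_nd _ fun z ↦ ?_)
  simp only [map_sub, LinearMap.sub_apply, LinearMap.smul_apply, map_smul,
    LinearMap.smulRight_apply, LinearMap.flip_apply, LinearMap.comp_apply, smul_eq_mul, hJ, hW]
  ring

variable [FiniteDimensional ℝ V]

lemma trace_jacobi (hg_nd : ∀ v, (∀ w, g v w = 0) → v = 0)
    (hW : ∀ x y z w, W x y z w = lam * (g (φ x) w * g (φ y) z - g (φ x) z * g (φ y) w))
    (hJ : ∀ x y z, g (J x y) z = W y x x z) (x : V) :
    LinearMap.trace ℝ V (J x) =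
      lam * (g (φ x) x * LinearMap.trace ℝ V φ - g (φ (φ x)) x) := by
  rw [jacobi_eq hg_nd hW hJ, map_smul, map_sub, map_smul, LinearMap.trace_smulRight]
  rfl

lemma trace_jacobi_of_eigenvector (hg_nd : ∀ v, (∀ w, g v w = 0) → v = 0)
    (hW : ∀ x y z w, W x y z w = lam * (g (φ x) w * g (φ y) z - g (φ x) z * g (φ y) w))
    (hJ : ∀ x y z, g (J x y) z = W y x x z) {s : ℝ} (hs : s * s = 1) {e : V}
    (he : φ e = s • e) :
    LinearMap.trace ℝ V (J e) = lam * g e e * (s * LinearMap.trace ℝ V φ - 1) := by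
  rw [trace_jacobi hg_nd hW hJ, he, map_smul, map_smul, he, smul_smul, hs, one_smul]
  simp only [LinearMap.smul_apply, smul_eq_mul]
  ring

end Jacobi

theorem stmt9_general {V : Type*} [AddCommGroup V] [Module ℝ V] [FiniteDimensional ℝ V]
    (g : V →ₗ[ℝ] V →ₗ[ℝ] ℝ)
    (hg_symm : ∀ x y, g x y = g y x)
    (hg_nd : ∀ v, (∀ w, g v w = 0) → v = 0)
    (φ : V →ₗ[ℝ] V)
    (hφ_sa : ∀ x y, g (φ x) y = g x (φ y))
    (hφ2 : ∀ x, φ (φ x) = x)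
    (hplus : ∃ v, v ≠ 0 ∧ φ v = v)
    (hminus : ∃ v, v ≠ 0 ∧ φ v = -v)
    (lam : ℝ)
    (W : V → V → V → V → ℝ)
    (hW : ∀ x y z w, W x y z w =
      lam * (g (φ x) w * g (φ y) z - g (φ x) z * g (φ y) w))
    (J : V → V →ₗ[ℝ] V)
    (hJ : ∀ x y z, g (J x y) z = W y x x z)
    (htr : ∀ x, LinearMap.trace ℝ V (J x) = 0) :
    lam = 0 := by
  have hvanish : ∀ s : ℝ, s * s = 1 → (∃ v, v ≠ 0 ∧ φ v = s • v) →
      lam * (s * LinearMap.trace ℝ V φ - 1) = 0 := by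
    rintro s hs ⟨v, hv0, hv⟩
    obtain ⟨e, he, hee⟩ :=
      exists_eigenvector_apply_self_ne_zero hg_symm hg_nd hφ_sa hφ2 hs hv0 hv
    have h := trace_jacobi_of_eigenvector hg_nd hW hJ hs he
    rw [htr, mul_right_comm, zero_eq_mul] at h
    exact h.resolve_right hee
  obtain ⟨vp, hvp0, hvp⟩ := hplus
  obtain ⟨vm, hvm0, hvm⟩ := hminus
  have hp := hvanish 1 (one_mul 1) ⟨vp, hvp0, by rwa [one_smul]⟩
  have hm := hvanish (-1) (by norm_num) ⟨vm, hvm0, by rwa [neg_one_smul]⟩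
  linear_combination (-1 / 2 : ℝ) * (hp + hm)

/-- If `W = λ A_φ` with `φ` a g-self-adjoint isometry, `φ² = Id`, both
eigenspaces nonzero, and `Tr(J_W(x)) = 0` for all `x`, then `λ = 0`. -/
theorem stmt9 {V : Type*} [AddCommGroup V] [Module ℝ V] [FiniteDimensional ℝ V]
    (g : V →ₗ[ℝ] V →ₗ[ℝ] ℝ)
    (hg_symm : ∀ x y, g x y = g y x)
    (hg_nd : ∀ v, (∀ w, g v w = 0) → v = 0)
    (φ : V →ₗ[ℝ] V)
    (hφ_sa : ∀ x y, g (φ x) y = g x (φ y))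
    (hφ_iso : ∀ x y, g (φ x) (φ y) = g x y)
    (hφ2 : ∀ x, φ (φ x) = x)
    (hplus : ∃ v, v ≠ 0 ∧ φ v = v)
    (hminus : ∃ v, v ≠ 0 ∧ φ v = -v)
    (lam : ℝ)
    (W : V → V → V → V → ℝ)
    (hW : ∀ x y z w, W x y z w =
      lam * (g (φ x) w * g (φ y) z - g (φ x) z * g (φ y) w))
    (J : V → V →ₗ[ℝ] V)
    (hJ : ∀ x y z, g (J x y) z = W y x x z)
    (htr : ∀ x, LinearMap.trace ℝ V (J x) = 0) :
    lam = 0 :=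
  stmt9_general g hg_symm hg_nd φ hφ_sa hφ2 hplus hminus lam W hW J hJ htr
end

section
/- Let φ be a self-adjoint isometry of a positive definite inner product space with φ² = Id, with ±1 eigenspaces of dimensions a^+ ≥ 1 and a^− ≥ 1, and let e^± be unit vectors in the respective eigenspaces. Then for W = λA_φ one has Tr(J_W(e^+)) = λ(a^+ − 1 − a^−) and Tr(J_W(e^−)) = λ(a^− − 1 − a^+). -/
/-!
Writing `J_W(x) = λ J(x)` with `J(x) y = ⟪φx, x⟫ φy − ⟪x, φy⟫ φx`, the trace of the rank-one
part is `⟪x, φ²x⟫ = ‖x‖²`, so `Tr J_W(x) = λ (⟪φx, x⟫ Tr φ − ‖x‖²)`. Since `φ` is an involution,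
`½(1 ± φ)` are the projections onto its `±1` eigenspaces, whence `Tr φ = a⁺ − a⁻`; and
`⟪φe^±, e^±⟫ = ±1`.
-/

open LinearMap Module
open scoped RealInnerProductSpace

section Involution

variable {K V : Type*} [Field K] [AddCommGroup V] [Module K V]

theorem LinearMap.isProj_ker_sub_id_of_involutive [Invertible (2 : K)] {φ : V →ₗ[K] V}
    (hφ : Function.Involutive φ) : IsProj (ker (φ - id)) ((⅟2 : K) • (id + φ)) where
  map_mem x := by
    simp only [mem_ker, LinearMap.sub_apply, LinearMap.smul_apply, add_apply, id_apply,
      map_smul, map_add, hφ x]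
    module
  map_id x hx := by
    have hx : φ x = x := sub_eq_zero.mp hx
    simp only [LinearMap.smul_apply, add_apply, id_apply, hx]
    rw [← two_smul K x, smul_smul, invOf_mul_self, one_smul]

theorem LinearMap.trace_eq_finrank_sub_finrank_of_involutive [Invertible (2 : K)]
    [FiniteDimensional K V] {φ : V →ₗ[K] V} (hφ : Function.Involutive φ) :
    trace K V φ = finrank K (ker (φ - id)) - finrank K (ker (φ + id)) := by
  have hneg : Function.Involutive (-φ) := fun x => by simp [hφ x]
  have hker : ker (-φ - id) = ker (φ + id) := by rw [← neg_add', ker_neg]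
  have hφ_eq : φ = (⅟2 : K) • (id + φ) - (⅟2 : K) • (id + -φ) := by
    rw [← smul_sub, add_sub_add_left_eq_sub, sub_neg_eq_add, ← two_smul K φ, smul_smul,
      invOf_mul_self, one_smul]
  conv_lhs => rw [hφ_eq]
  rw [map_sub, (isProj_ker_sub_id_of_involutive hφ).trace,
    ← hker, (isProj_ker_sub_id_of_involutive hneg).trace]

end Involution

section Jacobi

variable {V : Type*} [NormedAddCommGroup V] [InnerProductSpace ℝ V]

/-- The Jacobi operator `J_{A_φ}(x)` of `A_φ`. -/
noncomputable def jacobiA (φ : V →ₗ[ℝ] V) (x : V) : V →ₗ[ℝ] V :=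
  ⟪φ x, x⟫ • φ - (innerₛₗ ℝ x ∘ₗ φ).smulRight (φ x)

theorem inner_jacobiA_apply (φ : V →ₗ[ℝ] V) (x y z : V) :
    ⟪jacobiA φ x y, z⟫ = ⟪φ y, z⟫ * ⟪φ x, x⟫ - ⟪φ y, x⟫ * ⟪φ x, z⟫ := by
  simp only [jacobiA, LinearMap.sub_apply, LinearMap.smul_apply, smulRight_apply, comp_apply,
    innerₛₗ_apply_apply, inner_sub_left, real_inner_smul_left, real_inner_comm x (φ y)]
  ring

theorem trace_jacobiA [FiniteDimensional ℝ V] (φ : V →ₗ[ℝ] V) (x : V) :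
    trace ℝ V (jacobiA φ x) = ⟪φ x, x⟫ * trace ℝ V φ - ⟪x, φ (φ x)⟫ := by
  simp only [jacobiA, map_sub, map_smul, trace_smulRight, comp_apply, innerₛₗ_apply_apply,
    smul_eq_mul]

end Jacobi

theorem stmt10_general {V : Type*} [NormedAddCommGroup V] [InnerProductSpace ℝ V]
    [FiniteDimensional ℝ V]
    (φ : V →ₗ[ℝ] V)
    (hφ2 : ∀ x, φ (φ x) = x)
    (ap am : ℕ)
    (hap : ap = Module.finrank ℝ (LinearMap.ker (φ - LinearMap.id)))
    (ham : am = Module.finrank ℝ (LinearMap.ker (φ + LinearMap.id)))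
    (ep em : V)
    (hep : φ ep = ep) (hepu : ‖ep‖ = 1)
    (hem : φ em = -em) (hemu : ‖em‖ = 1)
    (lam : ℝ)
    (W : V → V → V → V → ℝ)
    (hW : ∀ x y z w, W x y z w =
      lam * (⟪φ x, w⟫ * ⟪φ y, z⟫ - ⟪φ x, z⟫ * ⟪φ y, w⟫))
    (J : V → V →ₗ[ℝ] V)
    (hJ : ∀ x y z, ⟪J x y, z⟫ = W y x x z) :
    LinearMap.trace ℝ V (J ep) = lam * ((ap : ℝ) - 1 - (am : ℝ)) ∧
    LinearMap.trace ℝ V (J em) = lam * ((am : ℝ) - 1 - (ap : ℝ)) := by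
  have hJ_eq (x : V) : J x = lam • jacobiA φ x := LinearMap.ext fun y => ext_inner_right ℝ
    fun z => by rw [hJ, hW, LinearMap.smul_apply, real_inner_smul_left, inner_jacobiA_apply]
  have htrace (x : V) :
      trace ℝ V (J x) = lam * (⟪φ x, x⟫ * ((ap : ℝ) - am) - ‖x‖ ^ 2) := by
    rw [hJ_eq, map_smul, trace_jacobiA, trace_eq_finrank_sub_finrank_of_involutive hφ2, hφ2,
      real_inner_self_eq_norm_sq, hap, ham, smul_eq_mul]
  refine ⟨?_, ?_⟩
  · rw [htrace, hep, real_inner_self_eq_norm_sq, hepu]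
    ring
  · rw [htrace, hem, inner_neg_left, real_inner_self_eq_norm_sq, hemu]
    ring

/-- For a self-adjoint isometry `φ` with `φ² = Id` of a positive
definite inner product space, eigenspace dimensions `a⁺, a⁻ ≥ 1`, unit eigenvectors
`e⁺, e⁻`, and `W = λ A_φ`: `Tr(J_W(e⁺)) = λ(a⁺ − 1 − a⁻)` and
`Tr(J_W(e⁻)) = λ(a⁻ − 1 − a⁺)`. -/
theorem stmt10 {V : Type*} [NormedAddCommGroup V] [InnerProductSpace ℝ V]
    [FiniteDimensional ℝ V]
    (φ : V →ₗ[ℝ] V)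
    (hφ_sa : ∀ x y, ⟪φ x, y⟫ = ⟪x, φ y⟫)
    (hφ2 : ∀ x, φ (φ x) = x)
    (ap am : ℕ)
    (hap : ap = Module.finrank ℝ (LinearMap.ker (φ - LinearMap.id)))
    (ham : am = Module.finrank ℝ (LinearMap.ker (φ + LinearMap.id)))
    (hap1 : 1 ≤ ap) (ham1 : 1 ≤ am)
    (ep em : V)
    (hep : φ ep = ep) (hepu : ‖ep‖ = 1)
    (hem : φ em = -em) (hemu : ‖em‖ = 1)
    (lam : ℝ)
    (W : V → V → V → V → ℝ)
    (hW : ∀ x y z w, W x y z w =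
      lam * (⟪φ x, w⟫ * ⟪φ y, z⟫ - ⟪φ x, z⟫ * ⟪φ y, w⟫))
    (J : V → V →ₗ[ℝ] V)
    (hJ : ∀ x y z, ⟪J x y, z⟫ = W y x x z) :
    LinearMap.trace ℝ V (J ep) = lam * ((ap : ℝ) - 1 - (am : ℝ)) ∧
    LinearMap.trace ℝ V (J em) = lam * ((am : ℝ) - 1 - (ap : ℝ)) :=
  stmt10_general φ hφ2 ap am hap ham ep em hep hepu hem hemu lam W hW J hJ
end

section
/- Let W = λ A_φ where φ is g-self-adjoint with φ² = 0. Then for any vectors e₁, e₂, the operator W(e₁,e₂,·,·)^♯ (raising an index with g) satisfies (W(e₁,e₂,·,·)^♯)² = 0, i.e. the skew-symmetric curvature operator associated to any 2-plane is nilpotent of order at most 2. -/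
/-!
Since `φ` is self-adjoint with `φ² = 0`, the image of `φ` is `g`-isotropic. The form `g (T x) ·`
is a combination of `g (φ e₁) ·` and `g (φ e₂) ·`, so it vanishes on the image of `φ`; by
self-adjointness and nondegeneracy this means `φ ∘ T = 0`. Hence `g (φ eᵢ) (T x) = g eᵢ (φ (T x)) = 0`,
and then `g (T (T x)) · = 0`, i.e. `T (T x) = 0`.
-/

namespace LinearMap

variable {R V : Type*} [CommRing R] [AddCommGroup V] [Module R V]
  {g : V →ₗ[R] V →ₗ[R] R} {φ T : V →ₗ[R] V} {lam : R} {e₁ e₂ : V}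

theorem apply_map_map_eq_zero (hφ_sa : ∀ x y, g (φ x) y = g x (φ y)) (hφ2 : ∀ x, φ (φ x) = 0)
    (a b : V) : g (φ a) (φ b) = 0 := by
  rw [hφ_sa, hφ2, map_zero]

theorem map_eq_zero_of_forall_apply_map_eq_zero (hg_nd : ∀ v, (∀ w, g v w = 0) → v = 0)
    (hφ_sa : ∀ x y, g (φ x) y = g x (φ y)) {v : V} (hv : ∀ y, g v (φ y) = 0) : φ v = 0 :=
  hg_nd _ fun w => (hφ_sa v w).trans (hv w)

theorem map_planeOperator_apply_eq_zero
    (hT : ∀ x y, g (T x) y = lam * (g (φ e₁) y * g (φ e₂) x - g (φ e₁) x * g (φ e₂) y))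
    (hg_nd : ∀ v, (∀ w, g v w = 0) → v = 0)
    (hφ_sa : ∀ x y, g (φ x) y = g x (φ y)) (hφ2 : ∀ x, φ (φ x) = 0) (x : V) : φ (T x) = 0 :=
  map_eq_zero_of_forall_apply_map_eq_zero hg_nd hφ_sa fun y => by
    rw [hT, apply_map_map_eq_zero hφ_sa hφ2, apply_map_map_eq_zero hφ_sa hφ2]
    ring

theorem planeOperator_apply_apply_eq_zero
    (hT : ∀ x y, g (T x) y = lam * (g (φ e₁) y * g (φ e₂) x - g (φ e₁) x * g (φ e₂) y))
    (hg_nd : ∀ v, (∀ w, g v w = 0) → v = 0)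
    (hφ_sa : ∀ x y, g (φ x) y = g x (φ y)) (hφ2 : ∀ x, φ (φ x) = 0) (x : V) : T (T x) = 0 := by
  have hTx : ∀ e, g (φ e) (T x) = 0 := fun e => by
    rw [hφ_sa, map_planeOperator_apply_eq_zero hT hg_nd hφ_sa hφ2, map_zero]
  exact hg_nd _ fun w => by rw [hT, hTx, hTx]; ring

end LinearMap

theorem stmt19_general {V : Type*} [AddCommGroup V] [Module ℝ V]
    (g : V →ₗ[ℝ] V →ₗ[ℝ] ℝ)
    (hg_nd : ∀ v, (∀ w, g v w = 0) → v = 0)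
    (φ : V →ₗ[ℝ] V)
    (hφ_sa : ∀ x y, g (φ x) y = g x (φ y))
    (hφ2 : ∀ x, φ (φ x) = 0)
    (lam : ℝ)
    (W : V → V → V → V → ℝ)
    (hW : ∀ x y z w, W x y z w =
      lam * (g (φ x) w * g (φ y) z - g (φ x) z * g (φ y) w))
    (e₁ e₂ : V)
    (T : V →ₗ[ℝ] V)
    (hT : ∀ x y, g (T x) y = W e₁ e₂ x y) :
    ∀ x, T (T x) = 0 :=
  LinearMap.planeOperator_apply_apply_eq_zero (fun x y => (hT x y).trans (hW e₁ e₂ x y))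
    hg_nd hφ_sa hφ2

/-- If `W = λ A_φ` with `φ` g-self-adjoint and `φ² = 0`, then the
skew-symmetric curvature operator of any 2-plane is nilpotent of order at most 2. -/
theorem stmt19 {V : Type*} [AddCommGroup V] [Module ℝ V] [FiniteDimensional ℝ V]
    (g : V →ₗ[ℝ] V →ₗ[ℝ] ℝ)
    (hg_symm : ∀ x y, g x y = g y x)
    (hg_nd : ∀ v, (∀ w, g v w = 0) → v = 0)
    (φ : V →ₗ[ℝ] V)
    (hφ_sa : ∀ x y, g (φ x) y = g x (φ y))
    (hφ2 : ∀ x, φ (φ x) = 0)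
    (lam : ℝ)
    (W : V → V → V → V → ℝ)
    (hW : ∀ x y z w, W x y z w =
      lam * (g (φ x) w * g (φ y) z - g (φ x) z * g (φ y) w))
    (e₁ e₂ : V)
    (T : V →ₗ[ℝ] V)
    (hT : ∀ x y, g (T x) y = W e₁ e₂ x y) :
    ∀ x, T (T x) = 0 :=
  stmt19_general g hg_nd φ hφ_sa hφ2 lam W hW e₁ e₂ T hT
end
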